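/- arXiv:1502.05136 — 2 statements merged into one kernel-verified Lean document; each statement's English description precedes it below -/
import Mathlib

section
/- Let A and B be Banach algebras and T ∈ hom(B, A) a surjective homomorphism. Then Z_t^{(ℓ)}((A ×_T B)'') = Z_t^{(ℓ)}(A'') ×_{T''} Z_t^{(ℓ)}(B''). In particular, A ×_T B is Arens regular if and only if both A and B are Arens regular. -/
open ContinuousLinearMap NormedSpace

variable {A B : Type*}
  [NonUnitalNormedRing A] [NormedSpace ℂ A] [IsScalarTower ℂ A A] [SMulCommClass ℂ A A]
  [CompleteSpace A]
  [NonUnitalNormedRing B] [NormedSpace ℂ B] [IsScalarTower ℂ B B] [SMulCommClass ℂ B B]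
  [CompleteSpace B]

/-- The morphism-product multiplication on `A × B`:
`(a₁,b₁)·(a₂,b₂) = (a₁a₂ + a₁T(b₂) + T(b₁)a₂, b₁b₂)`. -/
noncomputable def tMul (T : B →L[ℂ] A) (u v : A × B) : A × B :=
  (u.1 * v.1 + u.1 * T v.2 + T u.2 * v.1, u.2 * v.2)

/-- The ℓ¹ norm `‖(a,b)‖ = ‖a‖ + ‖b‖` on `A × B`. -/
noncomputable def tNorm (u : A × B) : ℝ := ‖u.1‖ + ‖u.2‖

/-- Auxiliary map: for `Φ` in the second dual of `E` and a bundled bilinear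
multiplication `M` on `E`, this is `f ↦ (a ↦ Φ (f ∘ M a))`, i.e. `f ↦ Φ · f`. -/
noncomputable def rAct {E : Type*} [NormedAddCommGroup E] [NormedSpace ℂ E]
    (M : E →L[ℂ] E →L[ℂ] E) (Φ : StrongDual ℂ (StrongDual ℂ E)) : StrongDual ℂ E →L[ℂ] StrongDual ℂ E :=
  (compL ℂ E (StrongDual ℂ E) ℂ Φ).comp
    (((compL ℂ E (E →L[ℂ] E) (StrongDual ℂ E)).flip M).comp (compL ℂ E E ℂ))

/-- The first Arens product `Φ □ Ψ` on the second dual of `E`, where the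
multiplication of `E` is given by the bundled bilinear map `M`:
`⟨Φ□Ψ, f⟩ = ⟨Φ, Ψ·f⟩` with `(Ψ·f)(a) = Ψ(f·a)` and `(f·a)(x) = f(ax)`. -/
noncomputable def arens1 {E : Type*} [NormedAddCommGroup E] [NormedSpace ℂ E]
    (M : E →L[ℂ] E →L[ℂ] E) (Φ Ψ : StrongDual ℂ (StrongDual ℂ E)) : StrongDual ℂ (StrongDual ℂ E) :=
  Φ.comp (rAct M Ψ)

/-- The second Arens product `Φ ◊ Ψ` on the second dual of `E`:
`⟨Φ◊Ψ, f⟩ = ⟨Ψ, f·Φ⟩` with `(f·Φ)(a) = Φ(a·f)` and `(a·f)(x) = f(xa)`. -/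
noncomputable def arens2 {E : Type*} [NormedAddCommGroup E] [NormedSpace ℂ E]
    (M : E →L[ℂ] E →L[ℂ] E) (Φ Ψ : StrongDual ℂ (StrongDual ℂ E)) : StrongDual ℂ (StrongDual ℂ E) :=
  Ψ.comp (rAct M.flip Φ)

/-- Bundled bilinear map `(u,v) ↦ M (f u) (g v)`. -/
noncomputable def bcomp {P E : Type*} [NormedAddCommGroup P] [NormedSpace ℂ P]
    [NormedAddCommGroup E] [NormedSpace ℂ E]
    (M : E →L[ℂ] E →L[ℂ] E) (f g : P →L[ℂ] E) : P →L[ℂ] P →L[ℂ] E :=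
  ((compL ℂ P E E).flip g).comp (M.comp f)

/-- The morphism-product multiplication `tMul T`, as a bundled bilinear map;
`tMulCLM T u v = tMul T u v`. -/
noncomputable def tMulCLM (T : B →L[ℂ] A) : (A × B) →L[ℂ] (A × B) →L[ℂ] (A × B) :=
  ((compL ℂ (A × B) A (A × B) (inl ℂ A B)).comp
    (bcomp (mul ℂ A) (fst ℂ A B) (fst ℂ A B + T.comp (snd ℂ A B)) +
     bcomp (mul ℂ A) (T.comp (snd ℂ A B)) (fst ℂ A B))) +
  ((compL ℂ (A × B) B (A × B) (inr ℂ A B)).comp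
    (bcomp (mul ℂ B) (snd ℂ A B) (snd ℂ A B)))

/-- The adjoint `T' : A' → B'`, `T'(f) = f ∘ T`. -/
noncomputable def dualT (T : B →L[ℂ] A) : StrongDual ℂ A →L[ℂ] StrongDual ℂ B := (compL ℂ B A ℂ).flip T

/-- The double adjoint `T'' : B'' → A''`, `T''(F) = F ∘ T'`. -/
noncomputable def ddT (T : B →L[ℂ] A) : StrongDual ℂ (StrongDual ℂ B) →L[ℂ] StrongDual ℂ (StrongDual ℂ A) :=
  (compL ℂ (StrongDual ℂ A) (StrongDual ℂ B) ℂ).flip (dualT T)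

/-- The identification `Θ : A'' × B'' → (A × B)''`, `Θ(Φ,Ψ)(F) = Φ(F∘inl) + Ψ(F∘inr)`,
i.e. `Θ(Φ,Ψ)(f,g) = Φ(f) + Ψ(g)` under the identification `(A × B)' ≅ A' × B'`. -/
noncomputable def Theta (Φ : StrongDual ℂ (StrongDual ℂ A)) (Ψ : StrongDual ℂ (StrongDual ℂ B)) :
    StrongDual ℂ (StrongDual ℂ (A × B)) :=
  Φ.comp ((compL ℂ A (A × B) ℂ).flip (inl ℂ A B)) +
  Ψ.comp ((compL ℂ B (A × B) ℂ).flip (inr ℂ A B))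

/-- The functional `(a,b) ↦ φ(a) + φ(T(b))` on `A × B`, for `φ : A → ℂ`. -/
noncomputable def charExt (T : B →L[ℂ] A) (φ : A →L[ℂ] ℂ) : (A × B) →L[ℂ] ℂ :=
  φ.comp (fst ℂ A B) + (φ.comp T).comp (snd ℂ A B)

/-- The functional `(a,b) ↦ ψ(b)` on `A × B`, for `ψ : B → ℂ`. -/
noncomputable def charSnd (ψ : B →L[ℂ] ℂ) : (A × B) →L[ℂ] ℂ :=
  ψ.comp (snd ℂ A B)

/-!
Every element of `(A × B)''` is `Θ(Φ, Ψ) = inl''Φ + inr''Ψ`, and expanding the product of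
`A ×_T B` bilinearly gives `Θ(Φ,Ψ) □ Θ(Φ',Ψ') = Θ(Φ□Φ' + Φ□T''Ψ' + T''Ψ□Φ', Ψ□Ψ')`, and likewise
for `◊`. As `T` is multiplicative, `T''` is multiplicative for both Arens products; as `T` is a
surjection of Banach spaces, `T'` is bounded below (open mapping), so `T''` is onto (Hahn–Banach).
Hence `T''` maps `Z_t^{(ℓ)}(B'')` into `Z_t^{(ℓ)}(A'')`, which makes the middle terms agree when
`Ψ` is in the centre; testing against `Θ(Φ', 0)` and `Θ(0, Ψ')` gives the converse.
-/

namespace ContinuousLinearMap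

section DualMap

variable {𝕜 E F G : Type*} [NontriviallyNormedField 𝕜]
  [NormedAddCommGroup E] [NormedSpace 𝕜 E] [NormedAddCommGroup F] [NormedSpace 𝕜 F]
  [NormedAddCommGroup G] [NormedSpace 𝕜 G]

noncomputable def dualMap (S : E →L[𝕜] F) : StrongDual 𝕜 F →L[𝕜] StrongDual 𝕜 E :=
  (compL 𝕜 E F 𝕜).flip S

@[simp] lemma dualMap_apply (S : E →L[𝕜] F) (f : StrongDual 𝕜 F) : S.dualMap f = f.comp S := rfl

lemma dualMap_add (S₁ S₂ : E →L[𝕜] F) : (S₁ + S₂).dualMap = S₁.dualMap + S₂.dualMap :=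
  map_add _ _ _

lemma dualMap_comp (S₁ : E →L[𝕜] F) (S₂ : F →L[𝕜] G) :
    (S₂.comp S₁).dualMap = S₁.dualMap.comp S₂.dualMap := rfl

lemma exists_norm_le_mul_norm_dualMap [CompleteSpace E] [CompleteSpace F] (S : E →L[𝕜] F)
    (hS : Function.Surjective S) : ∃ C, ∀ f : StrongDual 𝕜 F, ‖f‖ ≤ C * ‖S.dualMap f‖ := by
  obtain ⟨C, hC, hpre⟩ := S.exists_preimage_norm_le hS
  refine ⟨C, fun f => f.opNorm_le_bound (by positivity) fun y => ?_⟩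
  obtain ⟨x, rfl, hx⟩ := hpre y
  calc ‖f (S x)‖ = ‖S.dualMap f x‖ := rfl
    _ ≤ ‖S.dualMap f‖ * ‖x‖ := le_opNorm _ x
    _ ≤ ‖S.dualMap f‖ * (C * ‖S x‖) := by gcongr
    _ = C * ‖S.dualMap f‖ * ‖S x‖ := by ring

end DualMap

variable {𝕜 E F : Type*} [RCLike 𝕜]
  [NormedAddCommGroup E] [NormedSpace 𝕜 E] [NormedAddCommGroup F] [NormedSpace 𝕜 F]

lemma dualMap_surjective_of_norm_le {S : E →L[𝕜] F} {C : ℝ} (hS : ∀ x, ‖x‖ ≤ C * ‖S x‖) :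
    Function.Surjective S.dualMap := by
  intro φ
  have hinj : Function.Injective S := by
    refine (injective_iff_map_eq_zero S).2 fun x hx => norm_le_zero_iff.1 ?_
    simpa [hx] using hS x
  -- `φ ∘ S⁻¹` on the range of `S` is bounded by `‖φ‖ C`; extend it to all of `F`.
  let e := LinearEquiv.ofInjective S.toLinearMap hinj
  have he : ∀ x, (e x : F) = S x := fun x => LinearEquiv.ofInjective_apply _ _
  have hbound : ∀ y, ‖φ (e.symm y)‖ ≤ ‖φ‖ * C * ‖y‖ := fun y => calc
    ‖φ (e.symm y)‖ ≤ ‖φ‖ * ‖e.symm y‖ := φ.le_opNorm _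
    _ ≤ ‖φ‖ * (C * ‖S (e.symm y)‖) := by gcongr; exact hS _
    _ = ‖φ‖ * C * ‖y‖ := by rw [← he, e.apply_symm_apply, mul_assoc]; rfl
  obtain ⟨g, hg, -⟩ := exists_extension_norm_eq _
    ((φ.toLinearMap.comp e.symm.toLinearMap).mkContinuous _ hbound)
  refine ⟨g, ContinuousLinearMap.ext fun x => ?_⟩
  simpa [he] using hg (e x)

lemma dualMap_dualMap_surjective [CompleteSpace E] [CompleteSpace F] {S : E →L[𝕜] F}
    (hS : Function.Surjective S) : Function.Surjective S.dualMap.dualMap :=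
  have ⟨_, hC⟩ := exists_norm_le_mul_norm_dualMap S hS
  dualMap_surjective_of_norm_le hC

end ContinuousLinearMap

section ArensProducts

variable {E P : Type*} [NormedAddCommGroup E] [NormedSpace ℂ E]
  [NormedAddCommGroup P] [NormedSpace ℂ P]

def leftTopologicalCenter (M : E →L[ℂ] E →L[ℂ] E) : Set (StrongDual ℂ (StrongDual ℂ E)) :=
  {Φ | ∀ Ψ, arens1 M Φ Ψ = arens2 M Φ Ψ}

@[simp] lemma rAct_apply (M : E →L[ℂ] E →L[ℂ] E) (Φ : StrongDual ℂ (StrongDual ℂ E))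
    (f : StrongDual ℂ E) (a : E) : rAct M Φ f a = Φ (f.comp (M a)) := rfl

@[simp] lemma arens1_apply (M : E →L[ℂ] E →L[ℂ] E) (Φ Ψ : StrongDual ℂ (StrongDual ℂ E))
    (f : StrongDual ℂ E) : arens1 M Φ Ψ f = Φ (rAct M Ψ f) := rfl

@[simp] lemma arens2_apply (M : E →L[ℂ] E →L[ℂ] E) (Φ Ψ : StrongDual ℂ (StrongDual ℂ E))
    (f : StrongDual ℂ E) : arens2 M Φ Ψ f = Ψ (rAct M.flip Φ f) := rfl

lemma rAct_add (M₁ M₂ : E →L[ℂ] E →L[ℂ] E) (Ψ : StrongDual ℂ (StrongDual ℂ E)) :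
    rAct (M₁ + M₂) Ψ = rAct M₁ Ψ + rAct M₂ Ψ := by
  ext f a; simp [comp_add]

lemma arens1_add (M₁ M₂ : E →L[ℂ] E →L[ℂ] E) (Φ Ψ : StrongDual ℂ (StrongDual ℂ E)) :
    arens1 (M₁ + M₂) Φ Ψ = arens1 M₁ Φ Ψ + arens1 M₂ Φ Ψ := by
  ext f; simp [rAct_add]

lemma arens2_add (M₁ M₂ : E →L[ℂ] E →L[ℂ] E) (Φ Ψ : StrongDual ℂ (StrongDual ℂ E)) :
    arens2 (M₁ + M₂) Φ Ψ = arens2 M₁ Φ Ψ + arens2 M₂ Φ Ψ := by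
  ext f; simp [flip_add, rAct_add]

lemma arens1_add_right (M : E →L[ℂ] E →L[ℂ] E) (Φ Ψ₁ Ψ₂ : StrongDual ℂ (StrongDual ℂ E)) :
    arens1 M Φ (Ψ₁ + Ψ₂) = arens1 M Φ Ψ₁ + arens1 M Φ Ψ₂ := by
  ext f
  have : rAct M (Ψ₁ + Ψ₂) f = rAct M Ψ₁ f + rAct M Ψ₂ f := by ext a; simp
  simp [this]

lemma arens2_add_right (M : E →L[ℂ] E →L[ℂ] E) (Φ Ψ₁ Ψ₂ : StrongDual ℂ (StrongDual ℂ E)) :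
    arens2 M Φ (Ψ₁ + Ψ₂) = arens2 M Φ Ψ₁ + arens2 M Φ Ψ₂ := by
  ext f; simp

@[simp] lemma arens1_zero_right (M : E →L[ℂ] E →L[ℂ] E) (Φ : StrongDual ℂ (StrongDual ℂ E)) :
    arens1 M Φ 0 = 0 := by
  ext f
  have : rAct M 0 f = 0 := by ext a; simp
  simp [this]

@[simp] lemma arens2_zero_right (M : E →L[ℂ] E →L[ℂ] E) (Φ : StrongDual ℂ (StrongDual ℂ E)) :
    arens2 M Φ 0 = 0 := by
  ext f; simp

lemma arens1_compL_bcomp (M : E →L[ℂ] E →L[ℂ] E) (j : E →L[ℂ] P) (f g : P →L[ℂ] E)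
    (X Y : StrongDual ℂ (StrongDual ℂ P)) :
    arens1 ((compL ℂ P E P j).comp (bcomp M f g)) X Y
      = j.dualMap.dualMap (arens1 M (f.dualMap.dualMap X) (g.dualMap.dualMap Y)) := rfl

lemma arens2_compL_bcomp (M : E →L[ℂ] E →L[ℂ] E) (j : E →L[ℂ] P) (f g : P →L[ℂ] E)
    (X Y : StrongDual ℂ (StrongDual ℂ P)) :
    arens2 ((compL ℂ P E P j).comp (bcomp M f g)) X Y
      = j.dualMap.dualMap (arens2 M (f.dualMap.dualMap X) (g.dualMap.dualMap Y)) := rfl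

end ArensProducts

section BanachAlgebras

variable {E F : Type*} [NonUnitalNormedRing E] [NormedSpace ℂ E]
  [NonUnitalNormedRing F] [NormedSpace ℂ F]

lemma theta_eq (Φ : StrongDual ℂ (StrongDual ℂ E)) (Ψ : StrongDual ℂ (StrongDual ℂ F)) :
    Theta Φ Ψ = (inl ℂ E F).dualMap.dualMap Φ + (inr ℂ E F).dualMap.dualMap Ψ := rfl

@[simp] lemma fst_dualMap_dualMap_theta (Φ : StrongDual ℂ (StrongDual ℂ E))
    (Ψ : StrongDual ℂ (StrongDual ℂ F)) : (fst ℂ E F).dualMap.dualMap (Theta Φ Ψ) = Φ := by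
  ext f
  have h₁ : (f.comp (fst ℂ E F)).comp (inl ℂ E F) = f := by ext; simp
  have h₂ : (f.comp (fst ℂ E F)).comp (inr ℂ E F) = 0 := by ext; simp
  simp [theta_eq, h₁, h₂]

@[simp] lemma snd_dualMap_dualMap_theta (Φ : StrongDual ℂ (StrongDual ℂ E))
    (Ψ : StrongDual ℂ (StrongDual ℂ F)) : (snd ℂ E F).dualMap.dualMap (Theta Φ Ψ) = Ψ := by
  ext f
  have h₁ : (f.comp (snd ℂ E F)).comp (inl ℂ E F) = 0 := by ext; simp
  have h₂ : (f.comp (snd ℂ E F)).comp (inr ℂ E F) = f := by ext; simp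
  simp [theta_eq, h₁, h₂]

lemma theta_fst_snd (X : StrongDual ℂ (StrongDual ℂ (E × F))) :
    Theta ((fst ℂ E F).dualMap.dualMap X) ((snd ℂ E F).dualMap.dualMap X) = X := by
  have hid : (inl ℂ E F).comp (fst ℂ E F) + (inr ℂ E F).comp (snd ℂ E F) = .id ℂ (E × F) := by
    ext <;> simp
  calc _ = ((inl ℂ E F).comp (fst ℂ E F) + (inr ℂ E F).comp (snd ℂ E F)).dualMap.dualMap X := by
        simp only [theta_eq, dualMap_add, dualMap_comp]; rfl
    _ = X := by rw [hid]; rfl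

variable [IsScalarTower ℂ E E] [SMulCommClass ℂ E E] [IsScalarTower ℂ F F] [SMulCommClass ℂ F F]

lemma arens1_tMulCLM_theta (T : F →L[ℂ] E) (Φ Φ' : StrongDual ℂ (StrongDual ℂ E))
    (Ψ Ψ' : StrongDual ℂ (StrongDual ℂ F)) :
    arens1 (tMulCLM T) (Theta Φ Ψ) (Theta Φ' Ψ')
      = Theta (arens1 (mul ℂ E) Φ Φ' + arens1 (mul ℂ E) Φ (T.dualMap.dualMap Ψ')
            + arens1 (mul ℂ E) (T.dualMap.dualMap Ψ) Φ')
          (arens1 (mul ℂ F) Ψ Ψ') := by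
  rw [tMulCLM, comp_add, arens1_add, arens1_add,
    arens1_compL_bcomp, arens1_compL_bcomp, arens1_compL_bcomp]
  simp only [dualMap_add, dualMap_comp, add_apply, comp_apply,
    fst_dualMap_dualMap_theta, snd_dualMap_dualMap_theta, arens1_add_right, map_add]
  rw [theta_eq]
  simp only [map_add]

lemma arens2_tMulCLM_theta (T : F →L[ℂ] E) (Φ Φ' : StrongDual ℂ (StrongDual ℂ E))
    (Ψ Ψ' : StrongDual ℂ (StrongDual ℂ F)) :
    arens2 (tMulCLM T) (Theta Φ Ψ) (Theta Φ' Ψ')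
      = Theta (arens2 (mul ℂ E) Φ Φ' + arens2 (mul ℂ E) Φ (T.dualMap.dualMap Ψ')
            + arens2 (mul ℂ E) (T.dualMap.dualMap Ψ) Φ')
          (arens2 (mul ℂ F) Ψ Ψ') := by
  rw [tMulCLM, comp_add, arens2_add, arens2_add,
    arens2_compL_bcomp, arens2_compL_bcomp, arens2_compL_bcomp]
  simp only [dualMap_add, dualMap_comp, add_apply, comp_apply,
    fst_dualMap_dualMap_theta, snd_dualMap_dualMap_theta, arens2_add_right, map_add]
  rw [theta_eq]
  simp only [map_add]

variable {S : F →L[ℂ] E}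

lemma arens1_mul_dualMap_dualMap (hS : ∀ x y, S (x * y) = S x * S y)
    (Ψ₁ Ψ₂ : StrongDual ℂ (StrongDual ℂ F)) :
    arens1 (mul ℂ E) (S.dualMap.dualMap Ψ₁) (S.dualMap.dualMap Ψ₂)
      = S.dualMap.dualMap (arens1 (mul ℂ F) Ψ₁ Ψ₂) := by
  ext f
  simp only [arens1_apply, dualMap_apply, comp_apply]
  congr 1; ext b
  simp only [comp_apply, rAct_apply, dualMap_apply]
  congr 1; ext b'
  simp [hS]

lemma arens2_mul_dualMap_dualMap (hS : ∀ x y, S (x * y) = S x * S y)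
    (Ψ₁ Ψ₂ : StrongDual ℂ (StrongDual ℂ F)) :
    arens2 (mul ℂ E) (S.dualMap.dualMap Ψ₁) (S.dualMap.dualMap Ψ₂)
      = S.dualMap.dualMap (arens2 (mul ℂ F) Ψ₁ Ψ₂) := by
  ext f
  simp only [arens2_apply, dualMap_apply, comp_apply]
  congr 1; ext b
  simp only [comp_apply, rAct_apply, dualMap_apply]
  congr 1; ext b'
  simp [hS]

lemma dualMap_dualMap_mem_leftTopologicalCenter [CompleteSpace E] [CompleteSpace F]
    (hS : ∀ x y, S (x * y) = S x * S y) (hsurj : Function.Surjective S)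
    {Ψ : StrongDual ℂ (StrongDual ℂ F)} (hΨ : Ψ ∈ leftTopologicalCenter (mul ℂ F)) :
    S.dualMap.dualMap Ψ ∈ leftTopologicalCenter (mul ℂ E) := by
  intro Φ
  obtain ⟨Ψ', rfl⟩ := dualMap_dualMap_surjective hsurj Φ
  rw [arens1_mul_dualMap_dualMap hS, hΨ, arens2_mul_dualMap_dualMap hS]

end BanachAlgebras

lemma theta_mem_leftTopologicalCenter_iff (T : B →L[ℂ] A) (hT : ∀ x y, T (x * y) = T x * T y)
    (hsurj : Function.Surjective T) (Φ : StrongDual ℂ (StrongDual ℂ A))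
    (Ψ : StrongDual ℂ (StrongDual ℂ B)) :
    Theta Φ Ψ ∈ leftTopologicalCenter (tMulCLM T) ↔
      Φ ∈ leftTopologicalCenter (mul ℂ A) ∧ Ψ ∈ leftTopologicalCenter (mul ℂ B) := by
  constructor
  · intro h
    have hΨ : Ψ ∈ leftTopologicalCenter (mul ℂ B) := fun Ψ' => by
      simpa only [arens1_tMulCLM_theta, arens2_tMulCLM_theta, snd_dualMap_dualMap_theta] using
        congrArg (snd ℂ A B).dualMap.dualMap (h (Theta 0 Ψ'))
    refine ⟨fun Φ' => ?_, hΨ⟩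
    have hA := congrArg (fst ℂ A B).dualMap.dualMap (h (Theta Φ' 0))
    simp only [arens1_tMulCLM_theta, arens2_tMulCLM_theta, fst_dualMap_dualMap_theta, map_zero,
      arens1_zero_right, arens2_zero_right, add_zero] at hA
    rwa [dualMap_dualMap_mem_leftTopologicalCenter hT hsurj hΨ Φ', add_left_inj] at hA
  · rintro ⟨hΦ, hΨ⟩ X
    rw [← theta_fst_snd X, arens1_tMulCLM_theta, arens2_tMulCLM_theta, hΦ, hΦ, hΨ,
      dualMap_dualMap_mem_leftTopologicalCenter hT hsurj hΨ]

theorem left_topological_center_epimorphism_general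
    (T : B →L[ℂ] A) (hT : ∀ x y, T (x * y) = T x * T y)
    (hsurj : Function.Surjective T) :
    (∀ (Φ : StrongDual ℂ (StrongDual ℂ A)) (Ψ : StrongDual ℂ (StrongDual ℂ B)),
      (∀ X : StrongDual ℂ (StrongDual ℂ (A × B)),
          arens1 (tMulCLM T) (Theta Φ Ψ) X = arens2 (tMulCLM T) (Theta Φ Ψ) X) ↔
        ((∀ Φ' : StrongDual ℂ (StrongDual ℂ A),
            arens1 (mul ℂ A) Φ Φ' = arens2 (mul ℂ A) Φ Φ') ∧
         (∀ Ψ' : StrongDual ℂ (StrongDual ℂ B),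
            arens1 (mul ℂ B) Ψ Ψ' = arens2 (mul ℂ B) Ψ Ψ'))) ∧
    ((∀ X Y : StrongDual ℂ (StrongDual ℂ (A × B)),
        arens1 (tMulCLM T) X Y = arens2 (tMulCLM T) X Y) ↔
      ((∀ Φ Φ' : StrongDual ℂ (StrongDual ℂ A),
          arens1 (mul ℂ A) Φ Φ' = arens2 (mul ℂ A) Φ Φ') ∧
       (∀ Ψ Ψ' : StrongDual ℂ (StrongDual ℂ B),
          arens1 (mul ℂ B) Ψ Ψ' = arens2 (mul ℂ B) Ψ Ψ'))) := by
  have hcenter := theta_mem_leftTopologicalCenter_iff T hT hsurj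
  refine ⟨hcenter, fun h => ?_, fun ⟨hA, hB⟩ X => ?_⟩
  · exact ⟨fun Φ => ((hcenter Φ 0).1 (h _)).1, fun Ψ => ((hcenter 0 Ψ).1 (h _)).2⟩
  · rw [← theta_fst_snd X]
    exact (hcenter _ _).2 ⟨hA _, hB _⟩

/-- if `T` is surjective, then the left topological center of
`(A ×_T B)''` is exactly `Z_t^{(ℓ)}(A'') ×_{T''} Z_t^{(ℓ)}(B'')`; in particular
`A ×_T B` is Arens regular iff both `A` and `B` are Arens regular. -/
theorem left_topological_center_epimorphism
    (T : B →L[ℂ] A) (hT : ∀ x y, T (x * y) = T x * T y) (hTn : ‖T‖ ≤ 1)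
    (hsurj : Function.Surjective T) :
    (∀ (Φ : StrongDual ℂ (StrongDual ℂ A)) (Ψ : StrongDual ℂ (StrongDual ℂ B)),
      (∀ X : StrongDual ℂ (StrongDual ℂ (A × B)),
          arens1 (tMulCLM T) (Theta Φ Ψ) X = arens2 (tMulCLM T) (Theta Φ Ψ) X) ↔
        ((∀ Φ' : StrongDual ℂ (StrongDual ℂ A),
            arens1 (mul ℂ A) Φ Φ' = arens2 (mul ℂ A) Φ Φ') ∧
         (∀ Ψ' : StrongDual ℂ (StrongDual ℂ B),
            arens1 (mul ℂ B) Ψ Ψ' = arens2 (mul ℂ B) Ψ Ψ'))) ∧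
    ((∀ X Y : StrongDual ℂ (StrongDual ℂ (A × B)),
        arens1 (tMulCLM T) X Y = arens2 (tMulCLM T) X Y) ↔
      ((∀ Φ Φ' : StrongDual ℂ (StrongDual ℂ A),
          arens1 (mul ℂ A) Φ Φ' = arens2 (mul ℂ A) Φ Φ') ∧
       (∀ Ψ Ψ' : StrongDual ℂ (StrongDual ℂ B),
          arens1 (mul ℂ B) Ψ Ψ' = arens2 (mul ℂ B) Ψ Ψ'))) :=
  left_topological_center_epimorphism_general T hT hsurj
end

section
/- Let A and B be Banach algebras, T ∈ hom(B, A), and ψ a character on B. An element (Φ,Ψ) ∈ A'' ×_{T''} B'' is (0,ψ)-topologically left invariant with ⟨(Φ,Ψ),(0,ψ)⟩ ≠ 0 if and only if Ψ is ψ-topologically left invariant with Ψ(ψ) ≠ 0 and Φ = −T''(Ψ). -/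
open ContinuousLinearMap NormedSpace

variable {A B : Type*}
  [NonUnitalNormedRing A] [NormedSpace ℂ A] [IsScalarTower ℂ A A] [SMulCommClass ℂ A A]
  [CompleteSpace A]
  [NonUnitalNormedRing B] [NormedSpace ℂ B] [IsScalarTower ℂ B B] [SMulCommClass ℂ B B]
  [CompleteSpace B]

/-!
Testing the invariance of `Θ(Φ, Ψ)` at the points `(0, b)` against functionals living on `B`
gives the `ψ`-invariance of `Ψ`. At the points `(-T b, b)` the `A`-component of every product
`x · (-T b, b)` is `-T (x.2 b)`, so testing against functionals `g` living on `A` yields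
`ψ b · Φ g = -ψ b · Ψ (g ∘ T)`; some `ψ b` is nonzero because `Ψ ψ ≠ 0`. Conversely, for
`Φ = -T'' Ψ` multiplicativity of `T` turns the `A`-part of the invariance identity into the
`B`-part, which is the `ψ`-invariance of `Ψ`.
-/

section ArensProduct

variable {E : Type*} [NormedAddCommGroup E] [NormedSpace ℂ E] (M : E →L[ℂ] E →L[ℂ] E)

@[simp]
lemma arens1_inclusionInDoubleDual_apply (X : StrongDual ℂ (StrongDual ℂ E)) (u : E)
    (f : StrongDual ℂ E) :
    arens1 M X (inclusionInDoubleDual ℂ E u) f = X (f.comp (M.flip u)) :=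
  rfl

lemma arens1_inclusionInDoubleDual_eq_smul_iff (χ : E → ℂ) (X : StrongDual ℂ (StrongDual ℂ E)) :
    (∀ u, arens1 M X (inclusionInDoubleDual ℂ E u) = χ u • X) ↔
      ∀ u (f : StrongDual ℂ E), X (f.comp (M.flip u)) = χ u * X f := by
  simp only [ContinuousLinearMap.ext_iff, arens1_inclusionInDoubleDual_apply, smul_apply,
    smul_eq_mul]

end ArensProduct

section MorphismProduct

variable {R S : Type*} [NonUnitalNormedRing R] [NormedSpace ℂ R] [NonUnitalNormedRing S]
  [NormedSpace ℂ S]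

lemma Theta_apply (Φ : StrongDual ℂ (StrongDual ℂ R)) (Ψ : StrongDual ℂ (StrongDual ℂ S))
    (F : StrongDual ℂ (R × S)) :
    Theta Φ Ψ F = Φ (F.comp (inl ℂ R S)) + Ψ (F.comp (inr ℂ R S)) :=
  rfl

@[simp]
lemma ddT_apply (T : S →L[ℂ] R) (Ψ : StrongDual ℂ (StrongDual ℂ S)) (g : StrongDual ℂ R) :
    ddT T Ψ g = Ψ (g.comp T) :=
  rfl

variable [IsScalarTower ℂ R R] [SMulCommClass ℂ R R] [IsScalarTower ℂ S S] [SMulCommClass ℂ S S]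
  {T : S →L[ℂ] R}

@[simp]
lemma tMulCLM_apply (u v : R × S) : tMulCLM T u v = tMul T u v := by
  simp [tMulCLM, bcomp, tMul]

lemma comp_mul_flip_comp_of_map_mul (hT : ∀ x y, T (x * y) = T x * T y) (g : StrongDual ℂ R)
    (b : S) : (g.comp ((mul ℂ R).flip (T b))).comp T = (g.comp T).comp ((mul ℂ S).flip b) := by
  ext y
  simp [hT]

lemma Theta_comp_tMulCLM_flip (Φ : StrongDual ℂ (StrongDual ℂ R))
    (Ψ : StrongDual ℂ (StrongDual ℂ S)) (u : R × S) (F : StrongDual ℂ (R × S)) :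
    Theta Φ Ψ (F.comp ((tMulCLM T).flip u)) =
      Φ ((F.comp (inl ℂ R S)).comp ((mul ℂ R).flip (u.1 + T u.2))) +
      Ψ (((F.comp (inl ℂ R S)).comp ((mul ℂ R).flip u.1)).comp T +
        (F.comp (inr ℂ R S)).comp ((mul ℂ S).flip u.2)) := by
  rw [Theta_apply]
  congr 2 <;> ext x <;> simp [tMul, mul_add, ← map_add]

variable {ψ : S → ℂ} {Φ : StrongDual ℂ (StrongDual ℂ R)} {Ψ : StrongDual ℂ (StrongDual ℂ S)}

lemma leftInvariant_of_Theta_leftInvariant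
    (h : ∀ u F, Theta Φ Ψ (F.comp ((tMulCLM T).flip u)) = ψ u.2 * Theta Φ Ψ F) (b : S)
    (g : StrongDual ℂ S) : Ψ (g.comp ((mul ℂ S).flip b)) = ψ b * Ψ g := by
  have hb := h (0, b) ((0 : StrongDual ℂ R).coprod g)
  rw [Theta_comp_tMulCLM_flip, Theta_apply] at hb
  simpa using hb

lemma eq_neg_ddT_of_Theta_leftInvariant (hT : ∀ x y, T (x * y) = T x * T y)
    (h : ∀ u F, Theta Φ Ψ (F.comp ((tMulCLM T).flip u)) = ψ u.2 * Theta Φ Ψ F) {b : S}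
    (hb : ψ b ≠ 0) : Φ = -ddT T Ψ := by
  ext g
  have hg := h (-T b, b) (g.coprod 0)
  rw [Theta_comp_tMulCLM_flip, Theta_apply] at hg
  simp only [coprod_comp_inl, coprod_comp_inr, neg_add_cancel, map_zero, comp_zero, map_neg,
    comp_neg, neg_comp, zero_comp, add_zero, zero_add, comp_mul_flip_comp_of_map_mul hT,
    leftInvariant_of_Theta_leftInvariant h] at hg
  refine mul_left_cancel₀ hb ?_
  rw [neg_apply, ddT_apply, ← hg]
  ring

lemma Theta_neg_ddT_leftInvariant (hT : ∀ x y, T (x * y) = T x * T y)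
    (hΨ : ∀ b g, Ψ (g.comp ((mul ℂ S).flip b)) = ψ b * Ψ g) (u : R × S)
    (F : StrongDual ℂ (R × S)) :
    Theta (-ddT T Ψ) Ψ (F.comp ((tMulCLM T).flip u)) = ψ u.2 * Theta (-ddT T Ψ) Ψ F := by
  rw [Theta_comp_tMulCLM_flip, Theta_apply]
  simp only [neg_apply, ddT_apply, map_add, comp_add, comp_mul_flip_comp_of_map_mul hT, hΨ]
  ring

end MorphismProduct

theorem tli_for_charSnd_general
    (T : B →L[ℂ] A) (hT : ∀ x y, T (x * y) = T x * T y)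
    (ψ : B →L[ℂ] ℂ)
    (Φ : StrongDual ℂ (StrongDual ℂ A)) (Ψ : StrongDual ℂ (StrongDual ℂ B)) :
    ((∀ u : A × B,
        arens1 (tMulCLM T) (Theta Φ Ψ) (inclusionInDoubleDual ℂ (A × B) u) =
          ψ u.2 • Theta Φ Ψ) ∧
      Ψ ψ ≠ 0) ↔
    ((∀ b : B, arens1 (mul ℂ B) Ψ (inclusionInDoubleDual ℂ B b) = ψ b • Ψ) ∧
      Ψ ψ ≠ 0 ∧ Φ = -(ddT T Ψ)) := by
  rw [arens1_inclusionInDoubleDual_eq_smul_iff (tMulCLM T) (fun u => ψ u.2),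
    arens1_inclusionInDoubleDual_eq_smul_iff]
  constructor
  · rintro ⟨h, hne⟩
    obtain ⟨b, hb⟩ := DFunLike.ne_iff.mp (show ψ ≠ 0 by rintro rfl; exact hne (map_zero Ψ))
    exact ⟨leftInvariant_of_Theta_leftInvariant h, hne, eq_neg_ddT_of_Theta_leftInvariant hT h hb⟩
  · rintro ⟨hΨ, hne, rfl⟩
    exact ⟨Theta_neg_ddT_leftInvariant hT hΨ, hne⟩

/-- for a character `ψ` on `B`, `(Φ,Ψ)` is `(0,ψ)`-topologically left
invariant with `⟨(Φ,Ψ),(0,ψ)⟩ = Ψ(ψ) ≠ 0` iff `Ψ` is `ψ`-topologically left invariant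
with `Ψ(ψ) ≠ 0` and `Φ = −T''(Ψ)`. -/
theorem tli_for_charSnd
    (T : B →L[ℂ] A) (hT : ∀ x y, T (x * y) = T x * T y) (hTn : ‖T‖ ≤ 1)
    (ψ : B →L[ℂ] ℂ) (hψ0 : ψ ≠ 0) (hψm : ∀ x y : B, ψ (x * y) = ψ x * ψ y)
    (Φ : StrongDual ℂ (StrongDual ℂ A)) (Ψ : StrongDual ℂ (StrongDual ℂ B)) :
    ((∀ u : A × B,
        arens1 (tMulCLM T) (Theta Φ Ψ) (inclusionInDoubleDual ℂ (A × B) u) =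
          ψ u.2 • Theta Φ Ψ) ∧
      Ψ ψ ≠ 0) ↔
    ((∀ b : B, arens1 (mul ℂ B) Ψ (inclusionInDoubleDual ℂ B b) = ψ b • Ψ) ∧
      Ψ ψ ≠ 0 ∧ Φ = -(ddT T Ψ)) :=
  tli_for_charSnd_general T hT ψ Φ Ψ
end
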